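/- arXiv:1012.1243 — 6 statements merged into one kernel-verified Lean document; each statement's English description precedes it below -/
import Mathlib

section
/- For a natural number n and real numbers b, c with (c)_n ≠ 0 and c not a nonpositive integer in {0,-1,...,-(n-1)}, the Gauss summation for terminating series holds: ∑_{k=0}^n (-n)_k (b)_k / (k! (c)_k) = (c-b)_n / (c)_n. -/
open Finset Polynomial

private lemma poch_eval_neg_nat (n : ℕ) : ∀ k : ℕ, k ≤ n →
    (ascPochhammer ℝ k).eval (-(n : ℝ)) = (-1)^k * (Nat.factorial k) * (n.choose k) := by
  intro k
  induction k with
  | zero => simp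
  | succ k ih =>
    intro hk
    rw [ascPochhammer_succ_eval, ih (le_of_lt hk)]
    have h := Nat.choose_succ_right_eq n k
    have hnk : (-(n:ℝ) + k) = -((n - k : ℕ) : ℝ) := by
      push_cast [Nat.cast_sub (le_of_lt hk)]
      ring
    have h' : ((n.choose (k+1) : ℝ)) * (k+1) = (n.choose k : ℝ) * ((n - k : ℕ) : ℝ) := by
      exact_mod_cast congrArg (Nat.cast : ℕ → ℝ) h
    rw [hnk, Nat.factorial_succ]
    push_cast
    linear_combination ((-1:ℝ)^k * (Nat.factorial k : ℝ)) * h'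

private lemma vandermonde_key : ∀ n : ℕ, ∀ b c : ℝ,
    ∑ k ∈ range (n+1), (-1)^k * (n.choose k) * (ascPochhammer ℝ k).eval b *
        (ascPochhammer ℝ (n-k)).eval (c + k) = (ascPochhammer ℝ n).eval (c - b) := by
  intro n
  induction n with
  | zero => simp
  | succ n ih =>
    intro b c
    rw [Finset.sum_range_succ']
    have key1 : ∀ k ∈ range (n+1),
        (-1:ℝ)^(k+1) * ((n+1).choose (k+1)) * (ascPochhammer ℝ (k+1)).eval b *
            (ascPochhammer ℝ (n+1-(k+1))).eval (c + (k+1 : ℕ))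
        = ((-1:ℝ)^(k+1) * (n.choose (k+1)) * (ascPochhammer ℝ (k+1)).eval b *
              (ascPochhammer ℝ (n-k)).eval (c + k + 1))
          + (-((-1:ℝ)^k * (n.choose k) * ((ascPochhammer ℝ k).eval b * (b + k)) *
              (ascPochhammer ℝ (n-k)).eval (c + k + 1))) := by
      intro k _
      have h2 : n + 1 - (k+1) = n - k := by omega
      rw [h2, Nat.choose_succ_succ, ascPochhammer_succ_eval]
      push_cast
      generalize ((n.choose (k+1) : ℕ) : ℝ) = A
      ring
    rw [Finset.sum_congr rfl key1, Finset.sum_add_distrib, add_right_comm]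
    have key2 : (∑ k ∈ range (n+1), (-1:ℝ)^(k+1) * (n.choose (k+1)) *
          (ascPochhammer ℝ (k+1)).eval b * (ascPochhammer ℝ (n-k)).eval (c + k + 1))
        + (-1:ℝ)^0 * ((n+1).choose 0) * (ascPochhammer ℝ 0).eval b *
          (ascPochhammer ℝ (n+1-0)).eval (c + (0 : ℕ))
        = ∑ k ∈ range (n+1), (-1:ℝ)^k * (n.choose k) * (ascPochhammer ℝ k).eval b *
            ((c + k) * (ascPochhammer ℝ (n-k)).eval (c + k + 1)) := by
      have e1 : ∑ k ∈ range (n+1+1), (-1:ℝ)^k * (n.choose k) * (ascPochhammer ℝ k).eval b *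
            (ascPochhammer ℝ (n+1-k)).eval (c + k)
          = (∑ k ∈ range (n+1), (-1:ℝ)^(k+1) * (n.choose (k+1)) *
              (ascPochhammer ℝ (k+1)).eval b * (ascPochhammer ℝ (n-k)).eval (c + k + 1))
            + (-1:ℝ)^0 * ((n+1).choose 0) * (ascPochhammer ℝ 0).eval b *
              (ascPochhammer ℝ (n+1-0)).eval (c + (0 : ℕ)) := by
        rw [Finset.sum_range_succ']
        congr 1
        · apply Finset.sum_congr rfl
          intro k _
          have h2 : n + 1 - (k+1) = n - k := by omega
          rw [h2]
          push_cast
          ring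
        · norm_num
      have e2 : ∑ k ∈ range (n+1+1), (-1:ℝ)^k * (n.choose k) * (ascPochhammer ℝ k).eval b *
            (ascPochhammer ℝ (n+1-k)).eval (c + k)
          = ∑ k ∈ range (n+1), (-1:ℝ)^k * (n.choose k) * (ascPochhammer ℝ k).eval b *
              ((c + k) * (ascPochhammer ℝ (n-k)).eval (c + k + 1)) := by
        rw [Finset.sum_range_succ, Nat.choose_succ_self]
        simp only [Nat.cast_zero, mul_zero, zero_mul, add_zero]
        apply Finset.sum_congr rfl
        intro k hk
        rw [Finset.mem_range] at hk
        have h3 : n + 1 - k = (n - k) + 1 := by omega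
        rw [h3, ascPochhammer_succ_left]
        simp only [Polynomial.eval_mul, Polynomial.eval_comp, Polynomial.eval_add,
          Polynomial.eval_X, Polynomial.eval_one]
        try ring
      rw [← e1, e2]
    rw [key2, ← Finset.sum_add_distrib]
    have key3 : ∀ k ∈ range (n+1), (-1:ℝ)^k * (n.choose k) * (ascPochhammer ℝ k).eval b *
          ((c + k) * (ascPochhammer ℝ (n-k)).eval (c + k + 1))
        + -((-1:ℝ)^k * (n.choose k) * ((ascPochhammer ℝ k).eval b * (b + k)) *
            (ascPochhammer ℝ (n-k)).eval (c + k + 1))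
        = (c - b) * ((-1:ℝ)^k * (n.choose k) * (ascPochhammer ℝ k).eval b *
            (ascPochhammer ℝ (n-k)).eval ((c+1) + k)) := by
      intro k _
      have h4 : c + (k:ℝ) + 1 = (c + 1) + k := by ring
      rw [h4]; ring
    rw [Finset.sum_congr rfl key3, ← Finset.mul_sum, ih b (c+1), ascPochhammer_succ_left]
    simp only [Polynomial.eval_mul, Polynomial.eval_comp, Polynomial.eval_add,
      Polynomial.eval_X, Polynomial.eval_one]
    ring

private lemma poch_split (k n : ℕ) (hk : k ≤ n) (c : ℝ) :
    (ascPochhammer ℝ n).eval c =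
      (ascPochhammer ℝ k).eval c * (ascPochhammer ℝ (n-k)).eval (c + k) := by
  have h := ascPochhammer_mul (S := ℝ) k (n - k)
  have hkn : k + (n - k) = n := by omega
  rw [hkn] at h
  rw [← h]
  simp [Polynomial.eval_comp]

theorem gauss_summation_terminating (n : ℕ) (b c : ℝ)
    (hc : (ascPochhammer ℝ n).eval c ≠ 0)
    (hc' : ∀ j : ℕ, j < n → c ≠ -(j : ℝ)) :
    ∑ k ∈ Finset.range (n + 1),
        (ascPochhammer ℝ k).eval (-(n : ℝ)) * (ascPochhammer ℝ k).eval b /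
          ((Nat.factorial k) * (ascPochhammer ℝ k).eval c) =
      (ascPochhammer ℝ n).eval (c - b) / (ascPochhammer ℝ n).eval c := by
  rw [← vandermonde_key n b c, Finset.sum_div]
  apply Finset.sum_congr rfl
  intro k hk
  rw [Finset.mem_range] at hk
  have hkn : k ≤ n := by omega
  have hsplit := poch_split k n hkn c
  have hck : (ascPochhammer ℝ k).eval c ≠ 0 := by
    intro h; rw [hsplit, h, zero_mul] at hc; exact hc rfl
  have hq : (ascPochhammer ℝ (n-k)).eval (c + k) ≠ 0 := by
    intro h; rw [hsplit, h, mul_zero] at hc; exact hc rfl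
  have hfk : ((Nat.factorial k : ℝ)) ≠ 0 := by
    exact_mod_cast Nat.factorial_ne_zero k
  rw [poch_eval_neg_nat n k hkn, hsplit]
  field_simp
end

section
/- The terminating Pfaff–Euler transformation: for a natural number n, real b, c, x with appropriate nonvanishing denominators, ∑_{k=0}^n (-n)_k (b)_k x^k / (k! (c)_k) = ((c-b)_n/(c)_n) · ∑_{k=0}^n (-n)_k (b)_k (1-x)^k / (k! (b+1-n-c)_k). -/
/-!
Expanding `(1 - x) ^ k` binomially and splitting the Pochhammer symbols at `j`, the coefficient of
`x ^ j` on the right becomes a multiple of `₂F₁(-(n - j), b + j; d + j; 1)` with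
`d = b + 1 - n - c`. The Chu–Vandermonde identity evaluates this as
`(d - b)_(n-j) / (d + j)_(n-j)`, and the reflection `(x)_m = (-1)^m (1 - x - m)_m` turns
`(c - b)_n` and `(d - b)_(n-j)` into `(d)_n` and `(c + j)_(n-j)`, which gives the coefficient on the
left. Chu–Vandermonde is the falling-factorial Vandermonde convolution after substituting
`(-1)^i (β)_i = (-β)(-β - 1)⋯(-β - i + 1)` and `(γ + i)_(m-i) = (γ + m - 1)⋯(γ + i)`.
-/

open Finset Polynomial Nat

section CommRing

variable {R : Type*} [CommRing R]

theorem ascPochhammer_eval_add (i j : ℕ) (x : R) :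
    (ascPochhammer R (i + j)).eval x =
      (ascPochhammer R i).eval x * (ascPochhammer R j).eval (x + i) := by
  rw [← ascPochhammer_mul, eval_mul, eval_comp, eval_add, eval_X, eval_natCast]

theorem ascPochhammer_eval_eq_zero_of_le {i m : ℕ} (him : i ≤ m) {x : R}
    (hx : (ascPochhammer R i).eval x = 0) : (ascPochhammer R m).eval x = 0 := by
  obtain ⟨j, rfl⟩ := Nat.exists_eq_add_of_le him
  rw [ascPochhammer_eval_add, hx, zero_mul]

theorem ascPochhammer_eval_eq_descPochhammer (k : ℕ) (x : R) :
    (ascPochhammer R k).eval x = (descPochhammer R k).eval (x + k - 1) := by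
  rw [descPochhammer_eval_eq_ascPochhammer]
  ring_nf

theorem descPochhammer_eval_neg (k : ℕ) (x : R) :
    (descPochhammer R k).eval (-x) = (-1) ^ k * (ascPochhammer R k).eval x := by
  rw [← neg_neg x, ascPochhammer_eval_neg_eq_descPochhammer, neg_neg, ← mul_assoc, ← mul_pow]
  simp

theorem ascPochhammer_eval_one_sub_sub (m : ℕ) (x : R) :
    (ascPochhammer R m).eval (1 - x - m) = (-1) ^ m * (ascPochhammer R m).eval x := by
  rw [ascPochhammer_eval_eq_descPochhammer, show 1 - x - m + m - 1 = -x by ring,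
    descPochhammer_eval_neg]

theorem ascPochhammer_eval_neg_natCast (m i : ℕ) :
    (ascPochhammer R i).eval (-(m : R)) = (-1) ^ i * i ! * m.choose i := by
  rw [ascPochhammer_eval_neg_eq_descPochhammer, descPochhammer_eval_eq_descFactorial,
    Nat.descFactorial_eq_factorial_mul_choose, Nat.cast_mul, mul_assoc]

theorem descPochhammer_eval_add (r s : R) (m : ℕ) :
    (descPochhammer R m).eval (r + s) = ∑ i ∈ range (m + 1),
      m.choose i * (descPochhammer R i).eval r * (descPochhammer R (m - i)).eval s := by
  have hsmeval (k : ℕ) (t : R) :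
      (descPochhammer ℤ k).smeval t = (descPochhammer R k).eval t := by
    rw [descPochhammer_smeval_eq_ascPochhammer, ascPochhammer_smeval_eq_eval,
      descPochhammer_eval_eq_ascPochhammer]
  simp only [← hsmeval, Ring.descPochhammer_smeval_add m (Commute.all r s),
    Nat.sum_antidiagonal_eq_sum_range_succ_mk, mul_assoc]

theorem ascPochhammer_eval_sub_eq_sum (m : ℕ) (β γ : R) :
    (ascPochhammer R m).eval (γ - β) = ∑ i ∈ range (m + 1),
      (-1) ^ i * m.choose i * (ascPochhammer R i).eval β *
        (ascPochhammer R (m - i)).eval (γ + i) := by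
  rw [ascPochhammer_eval_eq_descPochhammer, show γ - β + m - 1 = -β + (γ + m - 1) by ring,
    descPochhammer_eval_add]
  refine sum_congr rfl fun i hi => ?_
  have him : i ≤ m := Nat.lt_succ_iff.mp (mem_range.mp hi)
  rw [ascPochhammer_eval_eq_descPochhammer (m - i), Nat.cast_sub him, descPochhammer_eval_neg]
  ring_nf

theorem sum_mul_one_sub_pow (n : ℕ) (a : ℕ → R) (x : R) :
    ∑ k ∈ range (n + 1), a k * (1 - x) ^ k =
      ∑ j ∈ range (n + 1),
        (∑ i ∈ range (n + 1 - j), ((j + i).choose j : R) * a (j + i)) * (-x) ^ j := by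
  have hexpand (k : ℕ) :
      a k * (1 - x) ^ k = ∑ j ∈ range (k + 1), a k * ((-x) ^ j * k.choose j) := by
    rw [sub_eq_neg_add, add_pow, mul_sum]
    simp only [one_pow, mul_one]
  simp only [hexpand, range_eq_Ico]
  rw [← sum_Ico_Ico_comm]
  refine sum_congr rfl fun j _ => ?_
  rw [sum_Ico_eq_sum_range, sum_mul, ← range_eq_Ico]
  exact sum_congr rfl fun i _ => by ring

end CommRing

section Field

variable {K : Type*} [Field K]

noncomputable def hyp2F1Coeff (n : ℕ) (b c : K) (k : ℕ) : K :=
  (ascPochhammer K k).eval (-(n : K)) * (ascPochhammer K k).eval b /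
    (k ! * (ascPochhammer K k).eval c)

/-- `₂F₁(-n, b; c; x)`. -/
noncomputable def terminatingHyp2F1 (n : ℕ) (b c x : K) : K :=
  ∑ k ∈ range (n + 1), hyp2F1Coeff n b c k * x ^ k

variable [CharZero K]

theorem terminatingHyp2F1_one (m : ℕ) (β γ : K) (hγ : (ascPochhammer K m).eval γ ≠ 0) :
    terminatingHyp2F1 m β γ 1 =
      (ascPochhammer K m).eval (γ - β) / (ascPochhammer K m).eval γ := by
  rw [eq_div_iff hγ, terminatingHyp2F1, sum_mul, ascPochhammer_eval_sub_eq_sum]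
  refine sum_congr rfl fun i hi => ?_
  have him : i ≤ m := Nat.lt_succ_iff.mp (mem_range.mp hi)
  have hγi : (ascPochhammer K i).eval γ ≠ 0 :=
    fun h => hγ (ascPochhammer_eval_eq_zero_of_le him h)
  obtain ⟨l, rfl⟩ := Nat.exists_eq_add_of_le him
  rw [ascPochhammer_eval_add, Nat.add_sub_cancel_left, hyp2F1Coeff, ascPochhammer_eval_neg_natCast,
    one_pow, mul_one]
  have hfact : (i ! : K) ≠ 0 := Nat.cast_ne_zero.mpr i.factorial_ne_zero
  field_simp

theorem choose_mul_hyp2F1Coeff_add (j i m : ℕ) (β γ : K)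
    (hγ : (ascPochhammer K (j + i)).eval γ ≠ 0) :
    ((j + i).choose j : K) * hyp2F1Coeff (j + m) β γ (j + i) =
      hyp2F1Coeff (j + m) β γ j * hyp2F1Coeff m (β + j) (γ + j) i := by
  rw [ascPochhammer_eval_add] at hγ
  have hγj : (ascPochhammer K j).eval γ ≠ 0 := left_ne_zero_of_mul hγ
  have hγi : (ascPochhammer K i).eval (γ + j) ≠ 0 := right_ne_zero_of_mul hγ
  have hshift : -((j + m : ℕ) : K) + j = -(m : K) := by push_cast; ring
  have hfact : ((j + i)! : K) ≠ 0 := Nat.cast_ne_zero.mpr (j + i).factorial_ne_zero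
  simp only [hyp2F1Coeff, ascPochhammer_eval_add j i, hshift, Nat.cast_add_choose]
  field_simp

theorem terminatingHyp2F1_one_sub (n : ℕ) (b d x : K) (hd : (ascPochhammer K n).eval d ≠ 0) :
    terminatingHyp2F1 n b d (1 - x) = ∑ j ∈ range (n + 1),
      hyp2F1Coeff n b d j * ((ascPochhammer K (n - j)).eval (d - b) /
        (ascPochhammer K (n - j)).eval (d + j)) * (-x) ^ j := by
  rw [terminatingHyp2F1, sum_mul_one_sub_pow]
  refine sum_congr rfl fun j hj => ?_
  obtain ⟨m, rfl⟩ := Nat.exists_eq_add_of_le (Nat.lt_succ_iff.mp (mem_range.mp hj))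
  have hdm : (ascPochhammer K m).eval (d + j) ≠ 0 :=
    right_ne_zero_of_mul (ascPochhammer_eval_add j m d ▸ hd)
  rw [show j + m + 1 - j = m + 1 by omega, Nat.add_sub_cancel_left,
    show d - b = d + j - (b + j) by ring, ← terminatingHyp2F1_one _ _ _ hdm, terminatingHyp2F1,
    mul_sum]
  congr 1
  refine sum_congr rfl fun i hi => ?_
  have hdi : (ascPochhammer K (j + i)).eval d ≠ 0 := fun h =>
    hd (ascPochhammer_eval_eq_zero_of_le (by simp at hi; omega) h)
  rw [choose_mul_hyp2F1Coeff_add _ _ _ _ _ hdi, one_pow, mul_one]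

theorem terminatingHyp2F1_eq_mul_terminatingHyp2F1_one_sub (n : ℕ) (b c x : K)
    (hc : (ascPochhammer K n).eval c ≠ 0) (hd : (ascPochhammer K n).eval (b + 1 - n - c) ≠ 0) :
    terminatingHyp2F1 n b c x = (ascPochhammer K n).eval (c - b) / (ascPochhammer K n).eval c *
      terminatingHyp2F1 n b (b + 1 - n - c) (1 - x) := by
  set d := b + 1 - n - c
  rw [terminatingHyp2F1_one_sub n b d x hd, terminatingHyp2F1, mul_sum]
  refine sum_congr rfl fun j hj => ?_
  obtain ⟨m, rfl⟩ := Nat.exists_eq_add_of_le (Nat.lt_succ_iff.mp (mem_range.mp hj))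
  have hcb : (ascPochhammer K (j + m)).eval (c - b) =
      (-1) ^ (j + m) * (ascPochhammer K (j + m)).eval d := by
    rw [← ascPochhammer_eval_one_sub_sub]; congr 1; ring
  have hdb : (ascPochhammer K m).eval (d - b) = (-1) ^ m * (ascPochhammer K m).eval (c + j) := by
    rw [← ascPochhammer_eval_one_sub_sub]; congr 1; simp only [d]; push_cast; ring
  have hsign : (-1 : K) ^ (j + m) * (-1) ^ m * (-1) ^ j = 1 := by
    rw [← pow_add, ← pow_add]
    exact Even.neg_one_pow ⟨j + m, by ring⟩
  rw [ascPochhammer_eval_add] at hc hd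
  have hfact : (j ! : K) ≠ 0 := Nat.cast_ne_zero.mpr j.factorial_ne_zero
  rw [Nat.add_sub_cancel_left, hcb, hdb, ascPochhammer_eval_add j m c, ascPochhammer_eval_add j m d,
    hyp2F1Coeff, hyp2F1Coeff, neg_pow x]
  field_simp [left_ne_zero_of_mul hc, right_ne_zero_of_mul hc, left_ne_zero_of_mul hd,
    right_ne_zero_of_mul hd]
  linear_combination -(ascPochhammer K j).eval (-((j + m : ℕ) : K)) * (ascPochhammer K j).eval b *
    x ^ j * hsign

end Field

theorem pfaff_euler_terminating (n : ℕ) (b c x : ℝ)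
    (hc : ∀ k ≤ n, (ascPochhammer ℝ k).eval c ≠ 0)
    (hd : ∀ k ≤ n, (ascPochhammer ℝ k).eval (b + 1 - (n : ℝ) - c) ≠ 0) :
    ∑ k ∈ Finset.range (n + 1),
        (ascPochhammer ℝ k).eval (-(n : ℝ)) * (ascPochhammer ℝ k).eval b * x ^ k /
          ((Nat.factorial k) * (ascPochhammer ℝ k).eval c) =
      ((ascPochhammer ℝ n).eval (c - b) / (ascPochhammer ℝ n).eval c) *
        ∑ k ∈ Finset.range (n + 1),
          (ascPochhammer ℝ k).eval (-(n : ℝ)) * (ascPochhammer ℝ k).eval b * (1 - x) ^ k /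
            ((Nat.factorial k) * (ascPochhammer ℝ k).eval (b + 1 - (n : ℝ) - c)) := by
  have hsum (γ y : ℝ) : ∑ k ∈ range (n + 1), (ascPochhammer ℝ k).eval (-(n : ℝ)) *
      (ascPochhammer ℝ k).eval b * y ^ k / (k ! * (ascPochhammer ℝ k).eval γ) =
      terminatingHyp2F1 n b γ y := by
    simp only [terminatingHyp2F1, hyp2F1Coeff, div_mul_eq_mul_div]
  rw [hsum, hsum]
  exact terminatingHyp2F1_eq_mul_terminatingHyp2F1_one_sub n b c x (hc n le_rfl) (hd n le_rfl)
end

section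
/- The multinomial theorem for rising factorials: for positive reals a_1, ..., a_r and a natural number n, ∑ over tuples (n_1,...,n_r) of nonnegative integers with n_1+···+n_r = n of the multinomial coefficient n!/(n_1!···n_r!) times ∏_{j=1}^r (a_j)_{n_j} equals (a_1+···+a_r)_n. -/
/-!
Rising factorials are of binomial type: `(x + y)_n = ∑ C(n, k) (x)_k (y)_(n-k)` (the
Chu–Vandermonde identity). Every sequence of binomial type satisfies the multinomial theorem, by
induction on the number of summands, exactly as the powers `x ^ n` do.
-/

open Finset Polynomial

theorem ascPochhammer_eval_add_s7 {S : Type*} [CommSemiring S] (n : ℕ) (x y : S) :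
    (ascPochhammer S n).eval (x + y) = ∑ kl ∈ antidiagonal n,
      n.choose kl.1 * ((ascPochhammer S kl.1).eval x * (ascPochhammer S kl.2).eval y) := by
  induction n with
  | zero => simp
  | succ n ih =>
    rw [sum_antidiagonal_choose_succ_mul
        (fun k l => (ascPochhammer S k).eval x * (ascPochhammer S l).eval y),
      ← sum_add_distrib, ascPochhammer_succ_eval, ih, sum_mul]
    refine sum_congr rfl fun kl hkl => ?_
    have hkl : kl.1 + kl.2 = n := mem_antidiagonal.mp hkl
    rw [← Nat.choose_symm_of_eq_add hkl.symm, ascPochhammer_succ_eval, ascPochhammer_succ_eval,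
      ← hkl]
    push_cast
    ring

theorem Nat.cast_multinomial {ι K : Type*} [Semifield K] [CharZero K] (s : Finset ι)
    (f : ι → ℕ) :
    (Nat.multinomial s f : K) = (∑ i ∈ s, f i).factorial / ∏ i ∈ s, ((f i).factorial : K) := by
  rw [eq_div_iff (prod_ne_zero_iff.mpr fun i _ => Nat.cast_ne_zero.mpr (Nat.factorial_ne_zero _)),
    ← Nat.multinomial_spec, mul_comm]
  push_cast
  rfl

theorem Finset.apply_sum_eq_sum_piAntidiag_of_binomial {ι R : Type*} [DecidableEq ι]
    [CommSemiring R] (p : ℕ → R → R) (hzero : ∀ n, p n 0 = if n = 0 then 1 else 0)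
    (hadd : ∀ n x y, p n (x + y) = ∑ kl ∈ antidiagonal n, n.choose kl.1 * (p kl.1 x * p kl.2 y))
    (s : Finset ι) (a : ι → R) (n : ℕ) :
    p n (∑ i ∈ s, a i) = ∑ f ∈ piAntidiag s n, Nat.multinomial s f * ∏ i ∈ s, p (f i) (a i) := by
  induction s using Finset.cons_induction generalizing n with
  | empty => by_cases hn : n = 0 <;> simp [hzero, hn]
  | cons i s hi ih =>
    rw [sum_cons, hadd, piAntidiag_cons, sum_disjiUnion]
    refine sum_congr rfl fun kl hkl => ?_
    rw [ih, mul_sum, mul_sum, sum_map]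
    refine sum_congr rfl fun g hg => ?_
    obtain ⟨hgs, hg⟩ := mem_piAntidiag.mp hg
    have hgi : g i = 0 := not_imp_comm.mp (hg i) hi
    set f := addRightEmbedding (fun t => if t = i then kl.1 else 0) g
    have hfi : f i = kl.1 := by simp [f, hgi]
    have hfs : ∀ j ∈ s, f j = g j := fun j hj => by simp [f, ne_of_mem_of_not_mem hj hi]
    have hprod : ∏ j ∈ s, p (f j) (a j) = ∏ j ∈ s, p (g j) (a j) :=
      prod_congr rfl fun j hj => by rw [hfs j hj]
    rw [Nat.multinomial_cons, prod_cons, hfi, sum_congr rfl hfs, hgs, mem_antidiagonal.mp hkl,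
      Nat.multinomial_congr hfs, hprod]
    push_cast
    ring

theorem multinomial_rising_general (r n : ℕ) (a : Fin r → ℝ) :
    ∑ f ∈ Finset.Nat.antidiagonalTuple r n,
        ((Nat.factorial n : ℝ) / ∏ j, (Nat.factorial (f j) : ℝ)) *
          ∏ j, (ascPochhammer ℝ (f j)).eval (a j) =
      (ascPochhammer ℝ n).eval (∑ j, a j) := by
  rw [← piAntidiag_univ_fin_eq_antidiagonalTuple]
  refine (sum_congr rfl fun f hf => ?_).trans (apply_sum_eq_sum_piAntidiag_of_binomial
    (fun n x => (ascPochhammer ℝ n).eval x) (fun _ => ascPochhammer_eval_zero ℝ)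
    ascPochhammer_eval_add_s7 univ a n).symm
  rw [Nat.cast_multinomial, (mem_piAntidiag.mp hf).1]

theorem multinomial_rising (r n : ℕ) (a : Fin r → ℝ) (ha : ∀ j, 0 < a j) :
    ∑ f ∈ Finset.Nat.antidiagonalTuple r n,
        ((Nat.factorial n : ℝ) / ∏ j, (Nat.factorial (f j) : ℝ)) *
          ∏ j, (ascPochhammer ℝ (f j)).eval (a j) =
      (ascPochhammer ℝ n).eval (∑ j, a j) :=
  multinomial_rising_general r n a
end

section
/- The generalized multivariate Chu–Vandermonde identity: for positive reals a_1,...,a_r and w_1,...,w_r, a natural number n, and a = a_1+···+a_r, ∑ over (n_1,...,n_r) with n_1+···+n_r = n of (n!/(n_1!···n_r!)) ∏_{j=1}^r w_j^{n_j} (a_j)_{n_j} equals w_r^n (a)_n · F, where F = ∑ over (n_1,...,n_{r-1}) with n_1+···+n_{r-1} ≤ n of (-n)_{Σn_j} (a_1)_{n_1}···(a_{r-1})_{n_{r-1}} / (a)_{Σn_j} · ∏_{j=1}^{r-1} (1 - w_j/w_r)^{n_j}/n_j!. -/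
/-!
Put `y j = w j / w_r` and expand `y j ^ n_j = (1 + (y j - 1)) ^ n_j` binomially. After
exchanging the summations, the coefficient of `∏ (y j - 1) ^ m_j` is a sum over the remaining
exponents `h = n - m`. Splitting `(a_j)_{m_j + h_j} = (a_j)_{m_j} (a_j + m_j)_{h_j}` turns it into
a multinomial Chu–Vandermonde sum, which collapses to `(a + |m|)_{n - |m|} = (a)_n / (a)_{|m|}`.
-/

open Finset Polynomial
open scoped Nat

section ascPochhammer

variable {R : Type*} [CommSemiring R]

theorem ascPochhammer_eval_add_s10 (x y : R) (m : ℕ) :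
    (ascPochhammer R m).eval (x + y) = ∑ ij ∈ antidiagonal m,
      (m.choose ij.1 : R) * ((ascPochhammer R ij.1).eval x * (ascPochhammer R ij.2).eval y) := by
  induction m with
  | zero => simp
  | succ m ih =>
    rw [sum_antidiagonal_choose_succ_mul
        (fun i j => (ascPochhammer R i).eval x * (ascPochhammer R j).eval y) m,
      ascPochhammer_succ_eval, ih, sum_mul, ← sum_add_distrib]
    refine sum_congr rfl fun ij hij => ?_
    obtain rfl : ij.1 + ij.2 = m := mem_antidiagonal.mp hij
    rw [← Nat.choose_symm_add, ascPochhammer_succ_eval, ascPochhammer_succ_eval]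
    push_cast
    ring

theorem ascPochhammer_eval_sum {ι : Type*} [DecidableEq ι] (s : Finset ι) (x : ι → R)
    (m : ℕ) :
    (ascPochhammer R m).eval (∑ i ∈ s, x i) = ∑ k ∈ s.piAntidiag m,
      (Nat.multinomial s k : R) * ∏ i ∈ s, (ascPochhammer R (k i)).eval (x i) := by
  induction s using Finset.cons_induction generalizing m with
  | empty => cases m <;> simp
  | cons a s has ih =>
    rw [piAntidiag_cons, sum_disjiUnion, sum_cons, ascPochhammer_eval_add_s10]
    refine sum_congr rfl fun p hp => ?_
    rw [sum_map, ih, mul_sum, mul_sum]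
    refine sum_congr rfl fun k hk => ?_
    have hka : k a = 0 := not_imp_comm.1 ((mem_piAntidiag.1 hk).2 a) has
    have hoff : ∀ i ∈ s, k i + (if i = a then p.1 else 0) = k i := fun i hi => by
      simp [ne_of_mem_of_not_mem hi has]
    simp only [addRightEmbedding_apply, Nat.multinomial_cons, prod_cons, Pi.add_apply, hka,
      ↓reduceIte, zero_add]
    rw [Nat.multinomial_congr (f := k + _) hoff, sum_congr rfl hoff,
      prod_congr rfl fun i hi => congrArg (fun e => (ascPochhammer R e).eval (x i)) (hoff i hi),
      (mem_piAntidiag.1 hk).1, mem_antidiagonal.1 hp]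
    push_cast
    ring

theorem ascPochhammer_add_eval (x : R) (k m : ℕ) :
    (ascPochhammer R (k + m)).eval x =
      (ascPochhammer R k).eval x * (ascPochhammer R m).eval (x + k) := by
  rw [← ascPochhammer_mul, eval_mul, eval_comp]
  simp

theorem prod_ascPochhammer_add_snoc_eval {r : ℕ} (a : Fin (r + 1) → R) (h : Fin (r + 1) → ℕ)
    (g : Fin r → ℕ) :
    ∏ j, (ascPochhammer R (h j + (Fin.snoc g 0 : Fin (r + 1) → ℕ) j)).eval (a j) =
      (∏ j, (ascPochhammer R (g j)).eval (a j.castSucc)) *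
        ∏ j, (ascPochhammer R (h j)).eval (a j + (Fin.snoc g 0 : Fin (r + 1) → ℕ) j) := by
  simp only [add_comm (h _), ascPochhammer_add_eval, prod_mul_distrib]
  congr 1
  simp [Fin.prod_univ_castSucc]

end ascPochhammer

theorem prod_pow_eq_sum_piFinset_prod_choose_mul_sub_one_pow {ι R : Type*} [Fintype ι]
    [DecidableEq ι] [CommRing R] (y : ι → R) (f : ι → ℕ) :
    ∏ i, y i ^ f i = ∑ g ∈ Fintype.piFinset fun i => range (f i + 1),
      ∏ i, ((f i).choose (g i) : R) * (y i - 1) ^ g i := by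
  refine (prod_congr rfl fun i _ => ?_).trans (prod_univ_sum (fun i => range (f i + 1))
    fun i j => ((f i).choose j : R) * (y i - 1) ^ j)
  rw [← sub_add_cancel (y i) 1, add_pow, sub_add_cancel]
  exact sum_congr rfl fun j _ => by ring

theorem mem_piFinset_range_filter_sum_le_iff {r n : ℕ} (g : Fin r → ℕ) :
    g ∈ (Fintype.piFinset fun _ => range (n + 1)).filter (fun g => ∑ j, g j ≤ n) ↔
      ∑ j, g j ≤ n := by
  simp only [mem_filter, Fintype.mem_piFinset, mem_range, and_iff_right_iff_imp, Nat.lt_succ_iff]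
  exact fun h j => (single_le_sum (fun i _ => Nat.zero_le (g i)) (mem_univ j)).trans h

theorem sum_antidiagonalTuple_sum_piFinset_comm {M : Type*} [AddCommMonoid M] (r n : ℕ)
    (F : (Fin (r + 1) → ℕ) → (Fin r → ℕ) → M) :
    ∑ f ∈ Nat.antidiagonalTuple (r + 1) n,
        ∑ g ∈ Fintype.piFinset (fun j => range (f j.castSucc + 1)), F f g =
      ∑ g ∈ (Fintype.piFinset fun _ : Fin r => range (n + 1)).filter
          (fun g => ∑ j, g j ≤ n),
        ∑ h ∈ Nat.antidiagonalTuple (r + 1) (n - ∑ j, g j), F (h + Fin.snoc g 0) g := by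
  rw [sum_comm' (t' := (Fintype.piFinset fun _ : Fin r => range (n + 1)).filter
      (fun g => ∑ j, g j ≤ n))
    (s' := fun g => (Nat.antidiagonalTuple (r + 1) (n - ∑ j, g j)).map
      (addRightEmbedding (Fin.snoc g 0 : Fin (r + 1) → ℕ))) ?_]
  · simp only [sum_map, addRightEmbedding_apply]
  intro f g
  have hle : g ∈ Fintype.piFinset (fun j => range (f j.castSucc + 1)) ↔
      (Fin.snoc g 0 : Fin (r + 1) → ℕ) ≤ f := by
    simp [Pi.le_def, Fin.forall_iff_castSucc]
  rw [hle, mem_piFinset_range_filter_sum_le_iff, mem_map, Nat.mem_antidiagonalTuple]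
  simp only [Nat.mem_antidiagonalTuple, addRightEmbedding_apply]
  constructor
  · rintro ⟨rfl, hc⟩
    have hsum := sum_le_sum fun j (_ : j ∈ univ) => hc j
    rw [Fin.sum_snoc, add_zero] at hsum
    refine ⟨⟨f - Fin.snoc g 0, ?_, tsub_add_cancel_of_le hc⟩, hsum⟩
    simp only [Pi.sub_apply]
    rw [sum_tsub_distrib _ fun j _ => hc j, Fin.sum_snoc, add_zero]
  · rintro ⟨⟨h, hh, rfl⟩, hgn⟩
    refine ⟨?_, le_add_self⟩
    simp only [Pi.add_apply]
    rw [sum_add_distrib, hh, Fin.sum_snoc, add_zero, Nat.sub_add_cancel hgn]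

theorem prod_factorial_add_snoc {r : ℕ} (h : Fin (r + 1) → ℕ) (g : Fin r → ℕ) :
    ∏ j, (h j + (Fin.snoc g 0 : Fin (r + 1) → ℕ) j)! =
      (∏ j, (h j.castSucc + g j).choose (g j)) * (∏ j, (h j)!) * ∏ j, (g j)! := by
  rw [prod_congr rfl fun j _ => (Nat.add_choose_mul_factorial_mul_factorial _ _).symm,
    prod_mul_distrib, prod_mul_distrib]
  simp [Fin.prod_univ_castSucc]

theorem factorial_eq_descFactorial_mul_multinomial {ι : Type*} [Fintype ι] {n s : ℕ}
    (h : ι → ℕ) (hsum : ∑ j, h j + s = n) :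
    n ! = n.descFactorial s * Nat.multinomial univ h * ∏ j, (h j)! := by
  rw [← Nat.factorial_mul_descFactorial (show s ≤ n by omega), show n - s = ∑ j, h j by omega,
    ← Nat.multinomial_spec]
  ring

section Lauricella

variable {K : Type*} [Field K] [CharZero K] {r n : ℕ} (a : Fin (r + 1) → K) (y : Fin r → K)

theorem factorial_div_mul_ascPochhammer_mul_binomial_eq {g : Fin r → ℕ}
    {h : Fin (r + 1) → ℕ} (hsum : ∑ j, h j + ∑ j, g j = n) :
    (n ! : K) / (∏ j, (((h + Fin.snoc g 0 : Fin (r + 1) → ℕ) j)! : K)) *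
        (∏ j, (ascPochhammer K ((h + Fin.snoc g 0 : Fin (r + 1) → ℕ) j)).eval (a j)) *
        ∏ j : Fin r, (((h + Fin.snoc g 0 : Fin (r + 1) → ℕ) j.castSucc).choose (g j) : K) *
          (y j - 1) ^ g j =
      (ascPochhammer K (∑ j, g j)).eval (-(n : K)) *
          (∏ j, (ascPochhammer K (g j)).eval (a j.castSucc)) *
          (∏ j, (1 - y j) ^ g j / ((g j)! : K)) *
        ((Nat.multinomial univ h : K) *
          ∏ j, (ascPochhammer K (h j)).eval (a j + (Fin.snoc g 0 : Fin (r + 1) → ℕ) j)) := by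
  simp only [Pi.add_apply, Fin.snoc_castSucc]
  rw [← Nat.cast_prod, prod_factorial_add_snoc, factorial_eq_descFactorial_mul_multinomial h hsum,
    prod_ascPochhammer_add_snoc_eval, ascPochhammer_eval_neg_eq_descPochhammer,
    descPochhammer_eval_eq_descFactorial, prod_div_distrib, prod_mul_distrib]
  have hsign : ∏ j, (y j - 1) ^ g j = (-1) ^ (∑ j, g j) * ∏ j, (1 - y j) ^ g j := by
    rw [← prod_pow_eq_pow_sum, ← prod_mul_distrib]
    exact prod_congr rfl fun j _ => by rw [← mul_pow, neg_one_mul, neg_sub]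
  have hchoose : ∏ j, (((h j.castSucc + g j).choose (g j) : ℕ) : K) ≠ 0 :=
    prod_ne_zero_iff.2 fun j _ => Nat.cast_ne_zero.2 (Nat.choose_pos (Nat.le_add_left _ _)).ne'
  have hh : ∏ j, ((h j)! : K) ≠ 0 :=
    prod_ne_zero_iff.2 fun j _ => Nat.cast_ne_zero.2 (Nat.factorial_ne_zero _)
  have hg : ∏ j, ((g j)! : K) ≠ 0 :=
    prod_ne_zero_iff.2 fun j _ => Nat.cast_ne_zero.2 (Nat.factorial_ne_zero _)
  rw [hsign]
  push_cast
  field_simp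

theorem sum_antidiagonalTuple_add_snoc_eq {g : Fin r → ℕ} (hg : ∑ j, g j ≤ n) :
    ∑ h ∈ Nat.antidiagonalTuple (r + 1) (n - ∑ j, g j),
        (n ! : K) / (∏ j, (((h + Fin.snoc g 0 : Fin (r + 1) → ℕ) j)! : K)) *
          (∏ j, (ascPochhammer K ((h + Fin.snoc g 0 : Fin (r + 1) → ℕ) j)).eval (a j)) *
          ∏ j : Fin r, (((h + Fin.snoc g 0 : Fin (r + 1) → ℕ) j.castSucc).choose (g j) : K) *
            (y j - 1) ^ g j =
      (ascPochhammer K (∑ j, g j)).eval (-(n : K)) *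
          (∏ j, (ascPochhammer K (g j)).eval (a j.castSucc)) *
          (ascPochhammer K (n - ∑ j, g j)).eval (∑ j, a j + ∑ j, g j) *
        ∏ j, (1 - y j) ^ g j / ((g j)! : K) := by
  rw [sum_congr rfl fun h hh => factorial_div_mul_ascPochhammer_mul_binomial_eq a y
      (by rw [Nat.mem_antidiagonalTuple.1 hh]; omega),
    ← mul_sum, ← piAntidiag_univ_fin_eq_antidiagonalTuple, ← ascPochhammer_eval_sum,
    sum_add_distrib, ← Nat.cast_sum, Fin.sum_snoc, add_zero]
  ring

/-- The identity for `w_r = 1` and `y j = w j`, with `(a)_n / (a)_{|g|}` written as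
`(a + |g|)_{n - |g|}` so that no Pochhammer symbol has to be nonzero. -/
theorem sum_antidiagonalTuple_factorial_div_mul_prod_pow_eq :
    ∑ f ∈ Nat.antidiagonalTuple (r + 1) n,
        (n ! : K) / (∏ j, ((f j)! : K)) * (∏ j, (ascPochhammer K (f j)).eval (a j)) *
          ∏ j : Fin r, y j ^ f j.castSucc =
      ∑ g ∈ (Fintype.piFinset fun _ : Fin r => range (n + 1)).filter
          (fun g => ∑ j, g j ≤ n),
        (ascPochhammer K (∑ j, g j)).eval (-(n : K)) *
          (∏ j, (ascPochhammer K (g j)).eval (a j.castSucc)) *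
          (ascPochhammer K (n - ∑ j, g j)).eval (∑ j, a j + ∑ j, g j) *
        ∏ j, (1 - y j) ^ g j / ((g j)! : K) := by
  rw [sum_congr rfl fun f _ => by
      rw [prod_pow_eq_sum_piFinset_prod_choose_mul_sub_one_pow y (fun j => f j.castSucc),
        mul_sum],
    sum_antidiagonalTuple_sum_piFinset_comm]
  exact sum_congr rfl fun g hg =>
    sum_antidiagonalTuple_add_snoc_eq a y ((mem_piFinset_range_filter_sum_le_iff g).1 hg)

end Lauricella

theorem prod_pow_eq_last_pow_sum_mul_prod_div_last_pow {K : Type*} [Field K] {r : ℕ}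
    (w : Fin (r + 1) → K) (f : Fin (r + 1) → ℕ) (hw : w (Fin.last r) ≠ 0) :
    ∏ j, w j ^ f j =
      w (Fin.last r) ^ (∑ j, f j) *
        ∏ j : Fin r, (w j.castSucc / w (Fin.last r)) ^ f j.castSucc := by
  rw [Fin.prod_univ_castSucc, Fin.sum_univ_castSucc, pow_add]
  simp only [div_pow, prod_div_distrib, prod_pow_eq_pow_sum]
  field_simp

theorem generalized_multivariate_chu_vandermonde (r n : ℕ)
    (a w : Fin (r + 1) → ℝ) (ha : ∀ j, 0 < a j) (hw : ∀ j, 0 < w j) :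
    ∑ f ∈ Finset.Nat.antidiagonalTuple (r + 1) n,
        ((Nat.factorial n : ℝ) / ∏ j, (Nat.factorial (f j) : ℝ)) *
          ∏ j, w j ^ f j * (ascPochhammer ℝ (f j)).eval (a j) =
      w (Fin.last r) ^ n * (ascPochhammer ℝ n).eval (∑ j, a j) *
        ∑ f ∈ (Fintype.piFinset fun _ : Fin r => Finset.range (n + 1)).filter
            (fun f => ∑ j, f j ≤ n),
          ((ascPochhammer ℝ (∑ j, f j)).eval (-(n : ℝ)) *
              ∏ j, (ascPochhammer ℝ (f j)).eval (a j.castSucc)) /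
            (ascPochhammer ℝ (∑ j, f j)).eval (∑ j, a j) *
            ∏ j, (1 - w j.castSucc / w (Fin.last r)) ^ f j /
              (Nat.factorial (f j) : ℝ) := by
  have hW : w (Fin.last r) ≠ 0 := (hw _).ne'
  have hA : 0 < ∑ j, a j := sum_pos (fun j _ => ha j) univ_nonempty
  calc _ = w (Fin.last r) ^ n * ∑ f ∈ Nat.antidiagonalTuple (r + 1) n,
        (n ! : ℝ) / (∏ j, ((f j)! : ℝ)) * (∏ j, (ascPochhammer ℝ (f j)).eval (a j)) *
          ∏ j : Fin r, (w j.castSucc / w (Fin.last r)) ^ f j.castSucc := by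
        rw [mul_sum]
        refine sum_congr rfl fun f hf => ?_
        rw [prod_mul_distrib, prod_pow_eq_last_pow_sum_mul_prod_div_last_pow w f hW,
          Nat.mem_antidiagonalTuple.1 hf]
        ring
    _ = _ := by
        rw [sum_antidiagonalTuple_factorial_div_mul_prod_pow_eq, mul_assoc]
        congr 1
        rw [mul_sum]
        refine sum_congr rfl fun g hg => ?_
        have hsplit : (ascPochhammer ℝ n).eval (∑ j, a j) =
            (ascPochhammer ℝ (∑ j, g j)).eval (∑ j, a j) *
              (ascPochhammer ℝ (n - ∑ j, g j)).eval (∑ j, a j + ∑ j, g j) := by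
          rw [← ascPochhammer_add_eval,
            Nat.add_sub_cancel' ((mem_piFinset_range_filter_sum_le_iff g).1 hg)]
        have hpos := (ascPochhammer_pos (∑ j, g j) _ hA).ne'
        rw [hsplit]
        field_simp
end

section
/- Lauricella summation at unit arguments: for natural n, positive reals b_1,...,b_r and c with (c)_n ≠ 0, ∑ over tuples (n_1,...,n_r) with n_1+···+n_r ≤ n of (-n)_m (b_1)_{n_1}···(b_r)_{n_r}/((c)_m n_1!···n_r!) = (c - (b_1+···+b_r))_n / (c)_n, where m = n_1+···+n_r. -/
open Polynomial Finset in
lemma desc_smeval_eq_eval (k : ℕ) (x : ℝ) :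
    (descPochhammer ℤ k).smeval x = (descPochhammer ℝ k).eval x := by
  rw [← aeval_eq_smeval, aeval_def, ← eval_map, descPochhammer_map]

open Polynomial Finset in
lemma desc_add_eval (x y : ℝ) (k : ℕ) :
    (descPochhammer ℝ k).eval (x + y) =
      ∑ ij ∈ antidiagonal k, (k.choose ij.1 : ℝ) *
        ((descPochhammer ℝ ij.1).eval x * (descPochhammer ℝ ij.2).eval y) := by
  have h := Ring.descPochhammer_smeval_add (R := ℝ) (r := x) (s := y) k (Commute.all x y)
  simpa [desc_smeval_eq_eval] using h

open Polynomial Finset in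
lemma desc_eval_neg (k : ℕ) (x : ℝ) :
    (descPochhammer ℝ k).eval (-x) = (-1) ^ k * (ascPochhammer ℝ k).eval x := by
  have h := ascPochhammer_eval_neg_eq_descPochhammer (R := ℝ) (-x) k
  rw [neg_neg] at h
  rw [h, ← mul_assoc, ← mul_pow, neg_mul_neg, one_mul, one_pow, one_mul]

open Polynomial Finset in
lemma asc_add_eval (x y : ℝ) (n : ℕ) :
    (ascPochhammer ℝ n).eval (x + y) =
      ∑ ij ∈ antidiagonal n, (n.choose ij.1 : ℝ) *
        ((ascPochhammer ℝ ij.1).eval x * (ascPochhammer ℝ ij.2).eval y) := by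
  have h1 := ascPochhammer_eval_neg_eq_descPochhammer (R := ℝ) (-(x + y)) n
  rw [neg_neg] at h1
  rw [h1, show -(x + y) = -x + -y by ring, desc_add_eval, mul_sum]
  refine Finset.sum_congr rfl fun ij hij => ?_
  have hsum : ij.1 + ij.2 = n := Finset.HasAntidiagonal.mem_antidiagonal.mp hij
  rw [desc_eval_neg, desc_eval_neg, ← hsum, pow_add]
  ring_nf
  simp [pow_mul', neg_one_sq, one_pow]

open Polynomial Finset in
lemma asc_add_div (x y : ℝ) (n : ℕ) :
    (ascPochhammer ℝ n).eval (x + y) / n.factorial =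
      ∑ ij ∈ antidiagonal n, ((ascPochhammer ℝ ij.1).eval x / ij.1.factorial) *
        ((ascPochhammer ℝ ij.2).eval y / ij.2.factorial) := by
  rw [asc_add_eval, sum_div]
  refine Finset.sum_congr rfl fun ij hij => ?_
  have hsum : ij.1 + ij.2 = n := Finset.HasAntidiagonal.mem_antidiagonal.mp hij
  have hfac : (n.choose ij.1 : ℝ) * ij.1.factorial * ij.2.factorial = n.factorial := by
    have := Nat.choose_mul_factorial_mul_factorial (le_of_add_le_left hsum.le) (n := n)
    rw [← hsum] at this ⊢
    rw [Nat.add_sub_cancel_left] at this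
    exact_mod_cast congrArg (Nat.cast : ℕ → ℝ) this
  field_simp
  linear_combination (eval x (ascPochhammer ℝ ij.1) * eval y (ascPochhammer ℝ ij.2)) * hfac

open Polynomial Finset in
lemma multiV {ι : Type*} [DecidableEq ι] (b : ι → ℝ) (s : Finset ι) (m : ℕ) :
    ∑ f ∈ s.piAntidiag m, ∏ j ∈ s, ((ascPochhammer ℝ (f j)).eval (b j) / (f j).factorial) =
      (ascPochhammer ℝ m).eval (∑ j ∈ s, b j) / m.factorial := by
  induction s using Finset.cons_induction generalizing m with
  | empty =>
    cases m with
    | zero => simp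
    | succ m => simp [ascPochhammer_eval_zero]
  | cons i s hi ih =>
    rw [Finset.piAntidiag_cons, Finset.sum_disjiUnion]
    have key : ∀ p : ℕ × ℕ, p ∈ antidiagonal m →
        (∑ f ∈ (s.piAntidiag p.2).map (addRightEmbedding fun t => if t = i then p.1 else 0),
          ∏ j ∈ Finset.cons i s hi, ((ascPochhammer ℝ (f j)).eval (b j) / (f j).factorial)) =
        ((ascPochhammer ℝ p.1).eval (b i) / p.1.factorial) *
          ((ascPochhammer ℝ p.2).eval (∑ j ∈ s, b j) / p.2.factorial) := by
      intro p hp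
      rw [Finset.sum_map, ← ih, Finset.mul_sum]
      refine Finset.sum_congr rfl fun g hg => ?_
      have hg0 : g i = 0 := by
        by_contra h
        exact hi ((Finset.mem_piAntidiag.mp hg).2 i h)
      rw [Finset.prod_cons]
      congr 1
      · simp [addRightEmbedding, hg0]
      · refine Finset.prod_congr rfl fun j hj => ?_
        have : j ≠ i := fun h => hi (h ▸ hj)
        simp [addRightEmbedding, this]
    rw [Finset.sum_congr rfl key, ← asc_add_div, Finset.sum_cons]

open Polynomial Finset in
lemma asc_split (m n : ℕ) (hm : m ≤ n) (c : ℝ) :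
    (ascPochhammer ℝ n).eval c =
      (ascPochhammer ℝ m).eval c * (ascPochhammer ℝ (n - m)).eval (c + m) := by
  have h := ascPochhammer_mul (S := ℝ) m (n - m)
  rw [Nat.add_sub_cancel' hm] at h
  have h2 := congrArg (eval c) h
  rw [eval_mul, eval_comp, eval_add, eval_X, eval_natCast] at h2
  exact h2.symm

open Polynomial Finset in
lemma asc_neg_nat (m n : ℕ) :
    (ascPochhammer ℝ m).eval (-(n : ℝ)) = (-1) ^ m * (n.descFactorial m : ℝ) := by
  rw [ascPochhammer_eval_neg_eq_descPochhammer, descPochhammer_eval_eq_descFactorial]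

open Polynomial Finset in
lemma asc_reflect (k : ℕ) (z : ℝ) :
    (ascPochhammer ℝ k).eval z = (-1) ^ k * (ascPochhammer ℝ k).eval (-z - k + 1) := by
  have h := ascPochhammer_eval_neg_eq_descPochhammer (R := ℝ) (-z) k
  rw [neg_neg] at h
  rw [h, descPochhammer_eval_eq_ascPochhammer]

open Polynomial Finset in
lemma keyK (n : ℕ) (B c : ℝ) :
    ∑ m ∈ range (n + 1), ((-1 : ℝ) ^ m * (n.choose m : ℝ) * (ascPochhammer ℝ m).eval B *
      (ascPochhammer ℝ (n - m)).eval (c + m)) = (ascPochhammer ℝ n).eval (c - B) := by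
  have step : ∀ m ∈ range (n + 1), (-1 : ℝ) ^ m * (n.choose m : ℝ) *
      (ascPochhammer ℝ m).eval B * (ascPochhammer ℝ (n - m)).eval (c + m) =
      (-1 : ℝ) ^ n * ((n.choose m : ℝ) * ((ascPochhammer ℝ m).eval B *
        (ascPochhammer ℝ (n - m)).eval (1 - c - n))) := by
    intro m hm
    have hm' : m ≤ n := Nat.lt_succ_iff.mp (mem_range.mp hm)
    rw [asc_reflect (n - m) (c + m)]
    have harg : -(c + (m : ℝ)) - ((n - m : ℕ) : ℝ) + 1 = 1 - c - n := by
      rw [Nat.cast_sub hm']; ring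
    rw [harg]
    have hsign : (-1 : ℝ) ^ m * (-1 : ℝ) ^ (n - m) = (-1 : ℝ) ^ n := by
      rw [← pow_add, Nat.add_sub_cancel' hm']
    linear_combination ((n.choose m : ℝ) * (ascPochhammer ℝ m).eval B *
      (ascPochhammer ℝ (n - m)).eval (1 - c - n)) * hsign
  rw [Finset.sum_congr rfl step, ← mul_sum]
  have hV : (ascPochhammer ℝ n).eval (B + (1 - c - n)) =
      ∑ m ∈ range (n + 1), (n.choose m : ℝ) * ((ascPochhammer ℝ m).eval B *
        (ascPochhammer ℝ (n - m)).eval (1 - c - n)) := by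
    rw [asc_add_eval, Finset.Nat.sum_antidiagonal_eq_sum_range_succ_mk]
  rw [← hV, show B + (1 - c - (n : ℝ)) = -(c - B) - n + 1 by ring,
    ← descPochhammer_eval_eq_ascPochhammer, desc_eval_neg, ← mul_assoc, ← mul_pow,
    neg_mul_neg, one_mul, one_pow, one_mul]

open Polynomial Finset in
lemma gauss (n : ℕ) (B c : ℝ) (hc : 0 < c) :
    ∑ m ∈ range (n + 1), (ascPochhammer ℝ m).eval (-(n : ℝ)) * (ascPochhammer ℝ m).eval B /
      ((ascPochhammer ℝ m).eval c * m.factorial) =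
    (ascPochhammer ℝ n).eval (c - B) / (ascPochhammer ℝ n).eval c := by
  have hcn : ∀ k, (ascPochhammer ℝ k).eval c ≠ 0 := fun k => (ascPochhammer_pos k c hc).ne'
  rw [eq_div_iff (hcn n), sum_mul, ← keyK n B c]
  refine Finset.sum_congr rfl fun m hm => ?_
  have hm' : m ≤ n := Nat.lt_succ_iff.mp (mem_range.mp hm)
  rw [asc_neg_nat, Nat.descFactorial_eq_factorial_mul_choose, asc_split m n hm' c]
  have h1 : (ascPochhammer ℝ m).eval c ≠ 0 := hcn m
  have h2 : (m.factorial : ℝ) ≠ 0 := Nat.cast_ne_zero.mpr m.factorial_ne_zero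
  push_cast
  field_simp

open Polynomial Finset in
theorem lauricella_unit_summation (r n : ℕ) (b : Fin r → ℝ) (c : ℝ)
    (hb : ∀ j, 0 < b j) (hc : 0 < c)
    (hcn : (ascPochhammer ℝ n).eval c ≠ 0) :
    ∑ f ∈ (Fintype.piFinset fun _ : Fin r => Finset.range (n + 1)).filter
        (fun f => ∑ j, f j ≤ n),
        ((ascPochhammer ℝ (∑ j, f j)).eval (-(n : ℝ)) *
            ∏ j, (ascPochhammer ℝ (f j)).eval (b j)) /
          ((ascPochhammer ℝ (∑ j, f j)).eval c *
            ∏ j, (Nat.factorial (f j) : ℝ)) =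
      (ascPochhammer ℝ n).eval (c - ∑ j, b j) / (ascPochhammer ℝ n).eval c := by
  classical
  set S := (Fintype.piFinset fun _ : Fin r => Finset.range (n + 1)).filter
      (fun f => ∑ j, f j ≤ n) with hS
  have hmaps : ∀ f ∈ S, (∑ j, f j) ∈ range (n + 1) := by
    intro f hf
    rw [mem_range, Nat.lt_succ_iff]
    exact (mem_filter.mp hf).2
  rw [← Finset.sum_fiberwise_of_maps_to hmaps]
  have hfib : ∀ m ∈ range (n + 1),
      S.filter (fun f => ∑ j, f j = m) = (univ : Finset (Fin r)).piAntidiag m := by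
    intro m hm
    have hm' : m ≤ n := Nat.lt_succ_iff.mp (mem_range.mp hm)
    ext f
    simp only [hS, mem_filter, Fintype.mem_piFinset, mem_range, mem_piAntidiag, mem_univ,
      implies_true, and_true]
    constructor
    · rintro ⟨⟨-, -⟩, h2⟩
      exact h2
    · intro h
      refine ⟨⟨fun j => ?_, h ▸ hm'⟩, h⟩
      have : f j ≤ ∑ i, f i := Finset.single_le_sum (fun i _ => Nat.zero_le _) (mem_univ j)
      have heq : ∑ i, f i = univ.sum f := rfl
      omega
  calc ∑ m ∈ range (n + 1), ∑ f ∈ S.filter (fun f => ∑ j, f j = m),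
        ((ascPochhammer ℝ (∑ j, f j)).eval (-(n : ℝ)) *
            ∏ j, (ascPochhammer ℝ (f j)).eval (b j)) /
          ((ascPochhammer ℝ (∑ j, f j)).eval c * ∏ j, (Nat.factorial (f j) : ℝ))
      = ∑ m ∈ range (n + 1), (ascPochhammer ℝ m).eval (-(n : ℝ)) *
          (ascPochhammer ℝ m).eval (∑ j, b j) / ((ascPochhammer ℝ m).eval c * m.factorial) := by
        refine Finset.sum_congr rfl fun m hm => ?_
        rw [hfib m hm]
        have hterm : ∀ f ∈ (univ : Finset (Fin r)).piAntidiag m,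
            ((ascPochhammer ℝ (∑ j, f j)).eval (-(n : ℝ)) *
              ∏ j, (ascPochhammer ℝ (f j)).eval (b j)) /
            ((ascPochhammer ℝ (∑ j, f j)).eval c * ∏ j, (Nat.factorial (f j) : ℝ)) =
            ((ascPochhammer ℝ m).eval (-(n : ℝ)) / (ascPochhammer ℝ m).eval c) *
              ∏ j, ((ascPochhammer ℝ (f j)).eval (b j) / (f j).factorial) := by
          intro f hf
          have hsum : ∑ j, f j = m := (mem_piAntidiag.mp hf).1
          rw [hsum, Finset.prod_div_distrib, div_mul_div_comm]
        rw [Finset.sum_congr rfl hterm, ← Finset.mul_sum, multiV, div_mul_div_comm]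
  _ = (ascPochhammer ℝ n).eval (c - ∑ j, b j) / (ascPochhammer ℝ n).eval c :=
        gauss n (∑ j, b j) c hc
end

section
/- Special case r = 2 of the generalized Chu–Vandermonde identity, stated as a polynomial identity avoiding division: for all reals α, β, w, z and natural n, ∑_{k=0}^n C(n,k)(α)_k w^k (β)_{n-k} z^{n-k} = ∑_{k=0}^n C(n,k)(α)_k (w-z)^k (α+β+k)_{n-k} z^{n-k}. -/
open Finset

private lemma asc_add_eval_s14 (j : ℕ) (x : ℝ) : ∀ m : ℕ,
    (ascPochhammer ℝ (j + m)).eval x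
      = (ascPochhammer ℝ j).eval x * (ascPochhammer ℝ m).eval (x + j)
  | 0 => by simp
  | m + 1 => by
    rw [← add_assoc, ascPochhammer_succ_eval, asc_add_eval_s14 j x m, ascPochhammer_succ_eval]
    push_cast
    ring

private lemma asc_vandermonde (x y : ℝ) : ∀ n : ℕ,
    ∑ k ∈ range (n + 1), (n.choose k : ℝ) * (ascPochhammer ℝ k).eval x *
      (ascPochhammer ℝ (n - k)).eval y = (ascPochhammer ℝ n).eval (x + y)
  | 0 => by simp
  | n + 1 => by
    have h1 : ∑ k ∈ range (n + 2), ((n+1).choose k : ℝ) * (ascPochhammer ℝ k).eval x *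
        (ascPochhammer ℝ (n + 1 - k)).eval y
        = (∑ k ∈ range (n + 1), ((n.choose k : ℝ) * (ascPochhammer ℝ k).eval x * (x + k) *
            (ascPochhammer ℝ (n - k)).eval y
          + (n.choose (k+1) : ℝ) * (ascPochhammer ℝ (k+1)).eval x *
            (ascPochhammer ℝ (n - k)).eval y))
          + (ascPochhammer ℝ (n + 1)).eval y := by
      rw [Finset.sum_range_succ']
      congr 1
      · apply Finset.sum_congr rfl
        intro k hk
        have : n + 1 - (k + 1) = n - k := by omega
        rw [this, Nat.choose_succ_succ, ascPochhammer_succ_eval]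
        push_cast
        ring
      · simp
    have h2 : ∑ k ∈ range (n + 1), ((n.choose (k+1) : ℝ) * (ascPochhammer ℝ (k+1)).eval x *
          (ascPochhammer ℝ (n - k)).eval y) + (ascPochhammer ℝ (n + 1)).eval y
        = ∑ k ∈ range (n + 1), (n.choose k : ℝ) * (ascPochhammer ℝ k).eval x *
          (ascPochhammer ℝ (n + 1 - k)).eval y := by
      have e1 : ∑ k ∈ range (n + 2), (n.choose k : ℝ) * (ascPochhammer ℝ k).eval x *
            (ascPochhammer ℝ (n + 1 - k)).eval y
          = ∑ k ∈ range (n + 1), ((n.choose (k+1) : ℝ) * (ascPochhammer ℝ (k+1)).eval x *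
            (ascPochhammer ℝ (n - k)).eval y) + (ascPochhammer ℝ (n + 1)).eval y := by
        rw [Finset.sum_range_succ']
        congr 1
        · apply Finset.sum_congr rfl
          intro k hk
          have : n + 1 - (k + 1) = n - k := by omega
          rw [this]
        · simp
      have e2 : ∑ k ∈ range (n + 2), (n.choose k : ℝ) * (ascPochhammer ℝ k).eval x *
            (ascPochhammer ℝ (n + 1 - k)).eval y
          = ∑ k ∈ range (n + 1), (n.choose k : ℝ) * (ascPochhammer ℝ k).eval x *
            (ascPochhammer ℝ (n + 1 - k)).eval y := by
        rw [Finset.sum_range_succ, Nat.choose_succ_self]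
        simp
      rw [← e1, e2]
    rw [h1, Finset.sum_add_distrib, add_assoc, h2, ascPochhammer_succ_eval]
    have h3 : ∑ k ∈ range (n + 1), (n.choose k : ℝ) * (ascPochhammer ℝ k).eval x *
          (ascPochhammer ℝ (n + 1 - k)).eval y
        = ∑ k ∈ range (n + 1), (n.choose k : ℝ) * (ascPochhammer ℝ k).eval x *
          ((ascPochhammer ℝ (n - k)).eval y * (y + ((n : ℝ) - k))) := by
      apply Finset.sum_congr rfl
      intro k hk
      have hk' : k ≤ n := by simpa [Nat.lt_succ_iff] using hk
      have : n + 1 - k = (n - k) + 1 := by omega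
      rw [this, ascPochhammer_succ_eval, Nat.cast_sub hk']
    rw [h3, ← Finset.sum_add_distrib, ← asc_vandermonde x y n, Finset.sum_mul]
    apply Finset.sum_congr rfl
    intro k hk
    ring

theorem chu_vandermonde_division_free (n : ℕ) (α β w z : ℝ) :
    ∑ k ∈ Finset.range (n + 1),
        (n.choose k : ℝ) * (ascPochhammer ℝ k).eval α * w ^ k *
          (ascPochhammer ℝ (n - k)).eval β * z ^ (n - k) =
      ∑ k ∈ Finset.range (n + 1),
        (n.choose k : ℝ) * (ascPochhammer ℝ k).eval α * (w - z) ^ k *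
          (ascPochhammer ℝ (n - k)).eval (α + β + k) * z ^ (n - k) := by
  set F : ℕ → ℕ → ℝ := fun j k =>
    (n.choose k : ℝ) * (k.choose j : ℝ) * (ascPochhammer ℝ k).eval α *
      (ascPochhammer ℝ (n - k)).eval β * (w - z) ^ j * z ^ (n - j) with hF
  have step1 : ∑ k ∈ Finset.range (n + 1),
        (n.choose k : ℝ) * (ascPochhammer ℝ k).eval α * w ^ k *
          (ascPochhammer ℝ (n - k)).eval β * z ^ (n - k)
      = ∑ k ∈ Finset.Ico 0 (n+1), ∑ j ∈ Finset.Ico 0 (k+1), F j k := by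
    rw [Finset.range_eq_Ico]
    apply Finset.sum_congr rfl
    intro k hk
    have hk' : k ≤ n := by simp [Finset.mem_Ico] at hk; omega
    have hw : w ^ k = ∑ j ∈ Finset.range (k+1), (w - z) ^ j * z ^ (k - j) * (k.choose j : ℝ) := by
      rw [← add_pow, sub_add_cancel]
    rw [hw, Finset.range_eq_Ico, Finset.mul_sum, Finset.sum_mul, Finset.sum_mul]
    apply Finset.sum_congr rfl
    intro j hj
    have hj' : j ≤ k := by simp [Finset.mem_Ico] at hj; omega
    have hz : z ^ (k - j) * z ^ (n - k) = z ^ (n - j) := by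
      rw [← pow_add]; congr 1; omega
    rw [hF]
    simp only
    rw [← hz]
    ring
  have step2 : ∑ k ∈ Finset.Ico 0 (n+1), ∑ j ∈ Finset.Ico 0 (k+1), F j k
      = ∑ j ∈ Finset.Ico 0 (n+1), ∑ k ∈ Finset.Ico j (n+1), F j k :=
    (Finset.sum_Ico_Ico_comm 0 (n+1) F).symm
  rw [step1, step2, ← Finset.range_eq_Ico]
  apply Finset.sum_congr rfl
  intro j hj
  have hj' : j ≤ n := by simpa [Nat.lt_succ_iff] using hj
  rw [Finset.sum_Ico_eq_sum_range]
  have hnj : n + 1 - j = (n - j) + 1 := by omega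
  rw [hnj]
  have inner : ∀ m ∈ Finset.range ((n - j) + 1), F j (j + m)
      = ((n.choose j : ℝ) * (ascPochhammer ℝ j).eval α * (w - z) ^ j * z ^ (n - j)) *
        (((n-j).choose m : ℝ) * (ascPochhammer ℝ m).eval (α + j) *
          (ascPochhammer ℝ ((n - j) - m)).eval β) := by
    intro m hm
    have hm' : m ≤ n - j := by simpa [Nat.lt_succ_iff] using hm
    have hjm : j + m ≤ n := by omega
    have hc : ((n.choose (j+m) : ℕ) * ((j+m).choose j) : ℕ)
        = n.choose j * (n - j).choose m := by
      have := Nat.choose_mul (n := n) (Nat.le_add_right j m)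
      simpa using this
    have hsub : n - (j + m) = (n - j) - m := by omega
    rw [hF]
    simp only
    rw [asc_add_eval_s14, hsub]
    have hcR : (n.choose (j+m) : ℝ) * ((j+m).choose j : ℝ)
        = (n.choose j : ℝ) * ((n - j).choose m : ℝ) := by
      exact_mod_cast congrArg (Nat.cast : ℕ → ℝ) hc
    linear_combination ((ascPochhammer ℝ j).eval α * (ascPochhammer ℝ m).eval (α + j) *
      (ascPochhammer ℝ ((n - j) - m)).eval β * (w - z) ^ j * z ^ (n - j)) * hcR
  calc ∑ m ∈ Finset.range ((n-j)+1), F j (j+m)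
      = ∑ m ∈ Finset.range ((n-j)+1),
        ((n.choose j : ℝ) * (ascPochhammer ℝ j).eval α * (w - z) ^ j * z ^ (n - j)) *
        (((n-j).choose m : ℝ) * (ascPochhammer ℝ m).eval (α + j) *
          (ascPochhammer ℝ ((n - j) - m)).eval β) := Finset.sum_congr rfl inner
    _ = _ := by
        rw [← Finset.mul_sum, asc_vandermonde (α + j) β (n - j),
          show α + (j:ℝ) + β = α + β + j by ring]
        ring
end
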